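/- arXiv:2209.07304 — 6 statements merged into one kernel-verified Lean document; each statement's English description precedes it below -/
import Mathlib

section
/- If x* satisfies the single-virus SIS fixed point equations for (A, τ), where A is the adjacency matrix of a connected undirected graph on N ≥ 1 vertices and τ > 0, then the average infection probability satisfies (1/N)·Σ_{i=1}^N x*_i ≤ 1 − 1/(τ·λ(A)). -/
open Matrix Finset

/-- Spectral radius of a real matrix: supremum of absolute values of its complex eigenvalues. -/
noncomputable def specRad {N : ℕ} (M : Matrix (Fin N) (Fin N) ℝ) : ℝ :=
  sSup ((fun z => ‖z‖) '' spectrum ℂ (M.map Complex.ofReal))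

/-- `A` is the adjacency matrix of a connected undirected graph:
symmetric, 0/1 entries, zero diagonal, and irreducible (connectivity). -/
def IsConnectedAdjMatrix {N : ℕ} (A : Matrix (Fin N) (Fin N) ℝ) : Prop :=
  A.IsSymm ∧ (∀ i j, A i j = 0 ∨ A i j = 1) ∧ (∀ i, A i i = 0) ∧
    (∀ i j, i ≠ j → ∃ k : ℕ, 0 < (A ^ k) i j)

/-- `x` satisfies the single-virus SIS fixed point equations for `(A, τ)`. -/
def IsSISFixedPoint {N : ℕ} (A : Matrix (Fin N) (Fin N) ℝ) (τ : ℝ)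
    (x : Fin N → ℝ) : Prop :=
  (∀ i, 0 < x i ∧ x i < 1) ∧ (∀ i, ∑ j, A i j * x j = x i / (τ * (1 - x i)))

/-!
Rayleigh's bound `xᵀ A x ≤ λ(A) xᵀ x` and the fixed-point equations give
`∑ xᵢ² / (1 - xᵢ) ≤ τ λ(A) ∑ xᵢ²`, which forces `σ := τ λ(A) > 1` and can be rewritten as
`∑ φ(xᵢ) (xᵢ - t) ≤ 0` with `φ(y) = y² / (1 - y)` and `t = 1 - 1/σ`. As `φ` is increasing,
`φ(xᵢ) (xᵢ - t) ≥ φ(t) (xᵢ - t)`, hence `∑ (xᵢ - t) ≤ 0`.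
-/

open scoped MatrixOrder

theorem Matrix.IsHermitian.dotProduct_mulVec_le {n : Type*} [Fintype n] [DecidableEq n]
    {A : Matrix n n ℝ} (hA : A.IsHermitian) {c : ℝ} (hc : ∀ μ ∈ spectrum ℝ A, μ ≤ c)
    (x : n → ℝ) : x ⬝ᵥ A *ᵥ x ≤ c * (x ⬝ᵥ x) := by
  have hpsd : (algebraMap ℝ _ c - A).PosSemidef :=
    Matrix.le_iff.mp ((le_algebraMap_iff_spectrum_le hA).mpr hc)
  have hquad : x ⬝ᵥ (algebraMap ℝ _ c - A) *ᵥ x = c * (x ⬝ᵥ x) - x ⬝ᵥ A *ᵥ x := by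
    simp [sub_mulVec, Algebra.algebraMap_eq_smul_one, smul_mulVec]
  linarith [hquad ▸ star_trivial x ▸ hpsd.dotProduct_mulVec_nonneg x]

theorem le_specRad_of_mem_spectrum {N : ℕ} {A : Matrix (Fin N) (Fin N) ℝ} {μ : ℝ}
    (hμ : μ ∈ spectrum ℝ A) : μ ≤ specRad A := by
  have hμℂ : (μ : ℂ) ∈ spectrum ℂ (A.map Complex.ofReal) := by
    rw [Matrix.mem_spectrum_iff_isRoot_charpoly] at hμ ⊢
    rw [show A.map Complex.ofReal = A.map Complex.ofRealHom from rfl, charpoly_map]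
    exact hμ.map
  calc μ ≤ ‖(μ : ℂ)‖ := by simpa using le_abs_self μ
    _ ≤ specRad A :=
      le_csSup ((Matrix.finite_spectrum _).image _).bddAbove (Set.mem_image_of_mem _ hμℂ)

theorem dotProduct_mulVec_le_specRad_mul {N : ℕ} {A : Matrix (Fin N) (Fin N) ℝ}
    (hA : A.IsSymm) (x : Fin N → ℝ) : x ⬝ᵥ A *ᵥ x ≤ specRad A * (x ⬝ᵥ x) :=
  (isHermitian_iff_isSymm.mpr hA).dotProduct_mulVec_le (fun _ => le_specRad_of_mem_spectrum) x

theorem monotoneOn_sq_div_one_sub : MonotoneOn (fun y : ℝ => y ^ 2 / (1 - y)) (Set.Ico 0 1) :=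
  fun a ha b hb hab => div_le_div₀ (sq_nonneg b) (pow_le_pow_left₀ ha.1 hab 2)
    (sub_pos.mpr hb.2) (by linarith)

theorem Finset.sum_le_card_mul_of_sum_mul_sub_nonpos {ι : Type*} {s : Finset ι} {S : Set ℝ}
    {f : ℝ → ℝ} (hf : MonotoneOn f S) {t : ℝ} (ht : t ∈ S) (hft : 0 < f t) {x : ι → ℝ}
    (hx : ∀ i ∈ s, x i ∈ S) (h : ∑ i ∈ s, f (x i) * (x i - t) ≤ 0) :
    ∑ i ∈ s, x i ≤ #s * t := by
  have hpoint : ∀ i ∈ s, f t * (x i - t) ≤ f (x i) * (x i - t) := by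
    intro i hi
    rcases le_total t (x i) with hti | hit
    · exact mul_le_mul_of_nonneg_right (hf ht (hx i hi) hti) (sub_nonneg.mpr hti)
    · exact mul_le_mul_of_nonpos_right (hf (hx i hi) ht hit) (sub_nonpos.mpr hit)
  have : f t * ∑ i ∈ s, (x i - t) ≤ 0 := by
    rw [mul_sum]
    exact (sum_le_sum hpoint).trans h
  rw [sum_sub_distrib, sum_const, nsmul_eq_mul] at this
  linarith [nonpos_of_mul_nonpos_right this hft]

theorem Finset.sum_le_card_mul_of_sum_sq_div_one_sub_le {ι : Type*} {s : Finset ι}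
    (hs : s.Nonempty) {x : ι → ℝ} (hx : ∀ i ∈ s, 0 < x i ∧ x i < 1) {σ : ℝ}
    (h : ∑ i ∈ s, x i ^ 2 / (1 - x i) ≤ σ * ∑ i ∈ s, x i ^ 2) :
    ∑ i ∈ s, x i ≤ #s * (1 - 1 / σ) := by
  have hσ : 1 < σ := by
    have hlt : ∑ i ∈ s, x i ^ 2 < ∑ i ∈ s, x i ^ 2 / (1 - x i) :=
      sum_lt_sum_of_nonempty hs fun i hi => by
        obtain ⟨h0, h1⟩ := hx i hi
        exact lt_div_iff₀ (by linarith) |>.mpr (by nlinarith [mul_pos (pow_pos h0 2) h0])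
    have hpos : 0 < ∑ i ∈ s, x i ^ 2 := sum_pos (fun i hi => pow_pos (hx i hi).1 2) hs
    by_contra! hle
    nlinarith
  have hσ0 : 0 < σ := one_pos.trans hσ
  set t := 1 - 1 / σ with ht
  have ht0 : 0 < t := sub_pos.mpr ((div_lt_one hσ0).mpr hσ)
  have ht1 : t < 1 := sub_lt_self 1 (one_div_pos.mpr hσ0)
  have hterm : ∀ i ∈ s,
      σ * (x i ^ 2 / (1 - x i) * (x i - t)) = x i ^ 2 / (1 - x i) - σ * x i ^ 2 := by
    intro i hi
    have : 1 - x i ≠ 0 := (sub_pos.mpr (hx i hi).2).ne'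
    rw [ht]
    field_simp
    ring
  have hsum : σ * ∑ i ∈ s, x i ^ 2 / (1 - x i) * (x i - t) ≤ 0 := by
    rw [mul_sum, sum_congr rfl hterm, sum_sub_distrib, ← mul_sum]
    linarith
  exact sum_le_card_mul_of_sum_mul_sub_nonpos monotoneOn_sq_div_one_sub ⟨ht0.le, ht1⟩
    (div_pos (pow_pos ht0 2) (sub_pos.mpr ht1)) (fun i hi => ⟨(hx i hi).1.le, (hx i hi).2⟩)
    (nonpos_of_mul_nonpos_right hsum hσ0)

theorem IsSISFixedPoint.dotProduct_mulVec_self {N : ℕ} {A : Matrix (Fin N) (Fin N) ℝ} {τ : ℝ}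
    {x : Fin N → ℝ} (hx : IsSISFixedPoint A τ x) :
    x ⬝ᵥ A *ᵥ x = τ⁻¹ * ∑ i, x i ^ 2 / (1 - x i) := by
  simp only [dotProduct, mulVec, hx.2, mul_sum]
  exact sum_congr rfl fun i _ => by field_simp

/-- If `x*` satisfies the single-virus SIS fixed point equations for `(A, τ)`,
where `A` is the adjacency matrix of a connected undirected graph on `N ≥ 1` vertices and
`τ > 0`, then the average infection probability satisfies
`(1/N)·Σ_i x*_i ≤ 1 − 1/(τ·λ(A))`. -/
theorem avg_infection_upper_bound {N : ℕ} (hN : 1 ≤ N)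
    (A : Matrix (Fin N) (Fin N) ℝ) (hA : IsConnectedAdjMatrix A)
    (τ : ℝ) (hτ : 0 < τ)
    (xstar : Fin N → ℝ) (hx : IsSISFixedPoint A τ xstar) :
    (1 / (N : ℝ)) * ∑ i, xstar i ≤ 1 - 1 / (τ * specRad A) := by
  have hrayleigh : ∑ i, xstar i ^ 2 / (1 - xstar i) ≤ (τ * specRad A) * ∑ i, xstar i ^ 2 := by
    have h := hx.dotProduct_mulVec_self ▸ dotProduct_mulVec_le_specRad_mul hA.1 xstar
    rw [inv_mul_le_iff₀ hτ] at h
    simpa only [dotProduct, ← sq, mul_assoc] using h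
  have hne : (univ : Finset (Fin N)).Nonempty := univ_nonempty_iff.mpr ⟨⟨0, hN⟩⟩
  have hsum := sum_le_card_mul_of_sum_sq_div_one_sub_le hne (fun i _ => hx.1 i) hrayleigh
  rw [card_univ, Fintype.card_fin] at hsum
  rw [one_div_mul_eq_div, div_le_iff₀ (by exact_mod_cast hN)]
  linarith
end

section
/- If x* satisfies the single-virus SIS fixed point equations for (A, τ), where A is the adjacency matrix of a connected undirected graph on N ≥ 1 vertices and τ > 0, then τ·λ(A) ≥ (1/N)·Σ_{i=1}^N 1/(1 − x*_i). -/
/-! Testing the Rayleigh quotient of `A` at `x*` and using the fixed point equations gives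
`τ λ(A) ‖x*‖² ≥ τ ⟪x*, A x*⟫ = Σ x_i² / (1 - x_i)`. The sequences `x_i²` and `1 / (1 - x_i)` are
similarly ordered, so Chebyshev's sum inequality bounds the right-hand side below by
`(1/N) ‖x*‖² Σ 1 / (1 - x_i)`. -/

open Matrix Finset

lemma specRad_nonneg {N : ℕ} (M : Matrix (Fin N) (Fin N) ℝ) : 0 ≤ specRad M :=
  Real.sSup_nonneg (by rintro _ ⟨z, -, rfl⟩; exact norm_nonneg z)

lemma Matrix.ofReal_mem_spectrum_map {n : Type*} [Fintype n] [DecidableEq n]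
    {M : Matrix n n ℝ} {μ : ℝ} (h : μ ∈ spectrum ℝ M) :
    (μ : ℂ) ∈ spectrum ℂ (M.map Complex.ofReal) := by
  rw [mem_spectrum_iff_isRoot_charpoly] at h ⊢
  exact (charpoly_map M Complex.ofRealHom).symm ▸ h.map

lemma abs_le_specRad_of_mem_spectrum {N : ℕ} {M : Matrix (Fin N) (Fin N) ℝ} {μ : ℝ}
    (h : μ ∈ spectrum ℝ M) : |μ| ≤ specRad M :=
  le_csSup ((finite_spectrum _).image _).bddAbove
    ⟨_, ofReal_mem_spectrum_map h, Complex.norm_real μ⟩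

lemma Matrix.IsHermitian.posSemidef_specRad_sub {N : ℕ} {A : Matrix (Fin N) (Fin N) ℝ}
    (hA : A.IsHermitian) : (algebraMap ℝ _ (specRad A) - A).PosSemidef := by
  rw [posSemidef_iff_isHermitian_and_spectrum_nonneg]
  refine ⟨(isHermitian_diagonal _).sub hA, ?_⟩
  rw [← spectrum.singleton_sub_eq]
  rintro _ ⟨_, rfl, μ, hμ, rfl⟩
  exact sub_nonneg.2 ((le_abs_self μ).trans (abs_le_specRad_of_mem_spectrum hμ))

lemma Matrix.IsHermitian.dotProduct_mulVec_le_specRad {N : ℕ} {A : Matrix (Fin N) (Fin N) ℝ}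
    (hA : A.IsHermitian) (v : Fin N → ℝ) : v ⬝ᵥ A *ᵥ v ≤ specRad A * (v ⬝ᵥ v) := by
  simpa [Algebra.algebraMap_eq_smul_one, sub_mulVec, dotProduct_sub, smul_mulVec] using
    hA.posSemidef_specRad_sub.re_dotProduct_nonneg v

lemma IsSISFixedPoint.sum_sq_div_one_sub_eq {N : ℕ} {A : Matrix (Fin N) (Fin N) ℝ} {τ : ℝ}
    {x : Fin N → ℝ} (hx : IsSISFixedPoint A τ x) (hτ : τ ≠ 0) :
    ∑ i, x i ^ 2 / (1 - x i) = τ * (x ⬝ᵥ A *ᵥ x) := by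
  rw [dotProduct, mul_sum]
  refine sum_congr rfl fun i _ => ?_
  have hxi : 1 - x i ≠ 0 := (sub_pos.2 (hx.1 i).2).ne'
  rw [mulVec, dotProduct, hx.2 i]
  field_simp

lemma sum_sq_mul_sum_one_div_one_sub_le {ι : Type*} (s : Finset ι) {x : ι → ℝ}
    (hx : ∀ i ∈ s, 0 ≤ x i ∧ x i < 1) :
    (∑ i ∈ s, x i ^ 2) * ∑ i ∈ s, 1 / (1 - x i) ≤ #s * ∑ i ∈ s, x i ^ 2 / (1 - x i) := by
  have hmono : MonovaryOn (fun i => x i ^ 2) (fun i => 1 / (1 - x i)) s := by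
    intro i hi j hj hlt
    have hij : x i < x j := by
      by_contra! h
      exact hlt.not_ge (one_div_le_one_div_of_le (sub_pos.2 (hx i hi).2) (by linarith))
    exact pow_le_pow_left₀ (hx i hi).1 hij.le 2
  simpa only [mul_one_div] using hmono.sum_mul_sum_le_card_mul_sum

theorem tau_lambda_lower_bound_general {N : ℕ}
    (A : Matrix (Fin N) (Fin N) ℝ) (hA : IsConnectedAdjMatrix A)
    (τ : ℝ) (hτ : 0 < τ)
    (xstar : Fin N → ℝ) (hx : IsSISFixedPoint A τ xstar) :
    (1 / (N : ℝ)) * ∑ i, 1 / (1 - xstar i) ≤ τ * specRad A := by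
  rcases N.eq_zero_or_pos with rfl | hN
  · simpa using mul_nonneg hτ.le (specRad_nonneg A)
  have hS : 0 < ∑ i, xstar i ^ 2 :=
    sum_pos (fun i _ => pow_pos (hx.1 i).1 2) (univ_nonempty_iff.2 ⟨⟨0, hN⟩⟩)
  have key : (∑ i, xstar i ^ 2) * ∑ i, 1 / (1 - xstar i)
      ≤ (∑ i, xstar i ^ 2) * (N * (τ * specRad A)) :=
    calc _ ≤ (N : ℝ) * ∑ i, xstar i ^ 2 / (1 - xstar i) := by
          simpa using sum_sq_mul_sum_one_div_one_sub_le univ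
            fun i _ => ⟨(hx.1 i).1.le, (hx.1 i).2⟩
      _ = N * (τ * (xstar ⬝ᵥ A *ᵥ xstar)) := by rw [hx.sum_sq_div_one_sub_eq hτ.ne']
      _ ≤ N * (τ * (specRad A * (xstar ⬝ᵥ xstar))) := by
          gcongr
          exact (isHermitian_iff_isSymm.2 hA.1).dotProduct_mulVec_le_specRad xstar
      _ = _ := by simp only [dotProduct, ← sq]; ring
  rw [one_div_mul_eq_div, div_le_iff₀ (by positivity)]
  linarith [le_of_mul_le_mul_left key hS]

/-- If `x*` satisfies the single-virus SIS fixed point equations for `(A, τ)`,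
where `A` is the adjacency matrix of a connected undirected graph on `N ≥ 1` vertices and
`τ > 0`, then `τ·λ(A) ≥ (1/N)·Σ_i 1/(1 − x*_i)`. -/
theorem tau_lambda_lower_bound {N : ℕ} (hN : 1 ≤ N)
    (A : Matrix (Fin N) (Fin N) ℝ) (hA : IsConnectedAdjMatrix A)
    (τ : ℝ) (hτ : 0 < τ)
    (xstar : Fin N → ℝ) (hx : IsSISFixedPoint A τ xstar) :
    (1 / (N : ℝ)) * ∑ i, 1 / (1 - xstar i) ≤ τ * specRad A :=
  tau_lambda_lower_bound_general A hA τ hτ xstar hx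
end

section
/- If x* satisfies the single-virus SIS fixed point equations for (A, τ), where A is the adjacency matrix of a connected undirected graph on N ≥ 1 vertices and τ > 0, then by the Collatz–Wielandt formula λ(A) ≤ max_{i} [A x*]_i / x*_i = 1/(τ(1 − max_i x*_i)). -/
/-!
Collatz–Wielandt: let `A ≥ 0` and `x > 0` with `A x ≤ s x`, and let `A v = μ v`, `v ≠ 0`. Take the
least `r` with `|v| ≤ r x`; at an index `i` where `|v i| = r x i`, the triangle inequality gives
`|μ| r x i ≤ (A |v|) i ≤ r (A x) i ≤ s r x i`, so `|μ| ≤ s`. At an SIS fixed point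
`(A x*) i / x* i = 1 / (τ (1 - x* i))` is increasing in `x* i`, so its maximum sits where `x*` is
largest.
-/

open Matrix Finset

theorem Finset.sup'_comp_eq_of_monotoneOn {ι α β : Type*} [LinearOrder α] [LinearOrder β]
    {s : Finset ι} (hs : s.Nonempty) {f : ι → α} {g : α → β} {t : Set α}
    (hg : MonotoneOn g t) (hf : ∀ i ∈ s, f i ∈ t) :
    s.sup' hs (g ∘ f) = g (s.sup' hs f) := by
  obtain ⟨i₀, hi₀, hmax⟩ := s.exists_mem_eq_sup' hs f
  rw [hmax]
  refine le_antisymm (sup'_le hs _ fun i hi => ?_) (le_sup' (g ∘ f) hi₀)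
  exact hg (hf i hi) (hf i₀ hi₀) (hmax ▸ le_sup' f hi)

namespace Matrix

variable {n : Type*} [Fintype n]

theorem exists_mulVec_eq_smul_of_mem_spectrum [DecidableEq n] {K : Type*} [Field K]
    {M : Matrix n n K} {μ : K} (hμ : μ ∈ spectrum K M) : ∃ v ≠ 0, M *ᵥ v = μ • v := by
  rw [← spectrum_toLin', ← Module.End.hasEigenvalue_iff_mem_spectrum] at hμ
  obtain ⟨v, hv⟩ := hμ.exists_hasEigenvector
  exact ⟨v, hv.2, by simpa using hv.apply_eq_smul⟩

theorem norm_mul_norm_le_of_mulVec_eq_smul {A : Matrix n n ℝ} (hA : ∀ i j, 0 ≤ A i j)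
    {v : n → ℂ} {μ : ℂ} (hv : A.map Complex.ofReal *ᵥ v = μ • v) (i : n) :
    ‖μ‖ * ‖v i‖ ≤ ∑ j, A i j * ‖v j‖ := by
  calc ‖μ‖ * ‖v i‖ = ‖∑ j, (A i j : ℂ) * v j‖ := by
        rw [← norm_mul, ← smul_eq_mul, ← Pi.smul_apply μ v i, ← hv]; rfl
    _ ≤ ∑ j, ‖(A i j : ℂ) * v j‖ := norm_sum_le _ _
    _ = ∑ j, A i j * ‖v j‖ := by
        simp only [norm_mul, Complex.norm_real, Real.norm_of_nonneg (hA i _)]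

theorem norm_le_of_mem_spectrum_of_mulVec_le [DecidableEq n] {A : Matrix n n ℝ}
    (hA : ∀ i j, 0 ≤ A i j) {x : n → ℝ} (hx : ∀ i, 0 < x i) {s : ℝ}
    (hAx : ∀ i, (A *ᵥ x) i ≤ s * x i) {μ : ℂ} (hμ : μ ∈ spectrum ℂ (A.map Complex.ofReal)) :
    ‖μ‖ ≤ s := by
  obtain ⟨v, hv₀, hv⟩ := exists_mulVec_eq_smul_of_mem_spectrum hμ
  obtain ⟨k, hk⟩ : ∃ k, v k ≠ 0 := Function.ne_iff.1 hv₀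
  have : Nonempty n := ⟨k⟩
  obtain ⟨i, hi⟩ := Finite.exists_max fun j => ‖v j‖ / x j
  set r := ‖v i‖ / x i
  have hv_le : ∀ j, ‖v j‖ ≤ r * x j := fun j => (div_le_iff₀ (hx j)).1 (hi j)
  have hr : 0 < r := (div_pos (norm_pos_iff.2 hk) (hx k)).trans_le (hi k)
  refine le_of_mul_le_mul_right ?_ (mul_pos hr (hx i))
  calc ‖μ‖ * (r * x i) = ‖μ‖ * ‖v i‖ := by rw [div_mul_cancel₀ _ (hx i).ne']
    _ ≤ ∑ j, A i j * ‖v j‖ := norm_mul_norm_le_of_mulVec_eq_smul hA hv i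
    _ ≤ ∑ j, A i j * (r * x j) :=
        sum_le_sum fun j _ => mul_le_mul_of_nonneg_left (hv_le j) (hA i j)
    _ = r * (A *ᵥ x) i := by
        simp only [mulVec, dotProduct, mul_sum]
        exact sum_congr rfl fun j _ => by ring
    _ ≤ r * (s * x i) := mul_le_mul_of_nonneg_left (hAx i) hr.le
    _ = s * (r * x i) := by ring

end Matrix

theorem specRad_le_of_mulVec_le {N : ℕ} (hN : 0 < N) {A : Matrix (Fin N) (Fin N) ℝ}
    (hA : ∀ i j, 0 ≤ A i j) {x : Fin N → ℝ} (hx : ∀ i, 0 < x i) {s : ℝ}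
    (hAx : ∀ i, (A *ᵥ x) i ≤ s * x i) : specRad A ≤ s := by
  have hs : 0 ≤ s := by
    let i : Fin N := ⟨0, hN⟩
    have hAx_nonneg : 0 ≤ (A *ᵥ x) i := by
      simp only [mulVec, dotProduct]
      exact sum_nonneg fun j _ => mul_nonneg (hA i j) (hx j).le
    exact nonneg_of_mul_nonneg_left (hAx_nonneg.trans (hAx i)) (hx i)
  refine Real.sSup_le ?_ hs
  rintro _ ⟨μ, hμ, rfl⟩
  exact Matrix.norm_le_of_mem_spectrum_of_mulVec_le hA hx hAx hμ

theorem IsConnectedAdjMatrix.nonneg {N : ℕ} {A : Matrix (Fin N) (Fin N) ℝ}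
    (hA : IsConnectedAdjMatrix A) (i j : Fin N) : 0 ≤ A i j := by
  rcases hA.2.1 i j with h | h <;> simp [h]

theorem IsSISFixedPoint.sum_mul_div_eq {N : ℕ} {A : Matrix (Fin N) (Fin N) ℝ} {τ : ℝ}
    {x : Fin N → ℝ} (hx : IsSISFixedPoint A τ x) (i : Fin N) :
    (∑ j, A i j * x j) / x i = 1 / (τ * (1 - x i)) := by
  rw [hx.2 i, div_div_cancel_left' (hx.1 i).1.ne', one_div]

/-- If `x*` satisfies the single-virus SIS fixed point equations for `(A, τ)`,
where `A` is the adjacency matrix of a connected undirected graph on `N ≥ 1` vertices and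
`τ > 0`, then by the Collatz–Wielandt formula
`λ(A) ≤ max_i [A x*]_i / x*_i = 1/(τ(1 − max_i x*_i))`. -/
theorem collatz_wielandt_bound {N : ℕ} (hN : 1 ≤ N)
    (A : Matrix (Fin N) (Fin N) ℝ) (hA : IsConnectedAdjMatrix A)
    (τ : ℝ) (hτ : 0 < τ)
    (xstar : Fin N → ℝ) (hx : IsSISFixedPoint A τ xstar) :
    specRad A ≤
      Finset.univ.sup' ⟨⟨0, hN⟩, Finset.mem_univ _⟩
        (fun i => (∑ j, A i j * xstar j) / xstar i) ∧
    Finset.univ.sup' ⟨⟨0, hN⟩, Finset.mem_univ _⟩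
        (fun i => (∑ j, A i j * xstar j) / xstar i) =
      1 / (τ * (1 - Finset.univ.sup' ⟨⟨0, hN⟩, Finset.mem_univ _⟩ xstar)) := by
  refine ⟨specRad_le_of_mulVec_le hN hA.nonneg (fun i => (hx.1 i).1) fun i => ?_, ?_⟩
  · exact (div_le_iff₀ (hx.1 i).1).1
      (le_sup' (fun i => (∑ j, A i j * xstar j) / xstar i) (mem_univ i))
  · simp_rw [hx.sum_mul_div_eq]
    refine sup'_comp_eq_of_monotoneOn _ (g := fun t => 1 / (τ * (1 - t))) (t := Set.Iio 1) ?_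
      fun i _ => (hx.1 i).2
    intro a _ b hb hab
    exact one_div_le_one_div_of_le (mul_pos hτ (sub_pos.2 hb))
      (mul_le_mul_of_nonneg_left (by linarith) hτ.le)
end

section
/- Let B be the adjacency matrix of a connected undirected graph on N vertices, fix τ₂ > 0, and let x, y : ℝ → ℝ^N be differentiable at a point τ₁ > 0, with 0 < x_i(τ), 0 < y_i(τ) and x_i(τ) + y_i(τ) < 1 for all i, for τ in a neighborhood of τ₁, and suppose that for every such τ the second coexistence fixed point equation Σ_j B_{ij} y_j(τ) = y_i(τ)/(τ₂(1 − x_i(τ) − y_i(τ))) holds for all i. If y_j'(τ₁) < 0 for all j, then for every i one has (1 − x_i(τ₁))·y_i'(τ₁) + y_i(τ₁)·x_i'(τ₁) < 0; in particular the derivative of τ ↦ y_i(τ)/(1 − x_i(τ)) at τ₁ is strictly negative for every i, i.e., y_i/(1 − x_i) strictly decreases in the effective infection rate τ₁ of Virus 1. -/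
open Matrix Finset

theorem Finset.sum_mul_neg_of_sum_mul_pos {ι R : Type*} [Fintype ι]
    [Ring R] [LinearOrder R] [IsStrictOrderedRing R] {w z v : ι → R}
    (hw : ∀ j, 0 ≤ w j) (hwz : 0 < ∑ j, w j * z j) (hv : ∀ j, v j < 0) :
    ∑ j, w j * v j < 0 := by
  obtain ⟨j₀, -, hj₀⟩ := Finset.exists_ne_zero_of_sum_ne_zero hwz.ne'
  have hw₀ : 0 < w j₀ := (hw j₀).lt_of_ne' (left_ne_zero_of_mul hj₀)
  simpa using Finset.sum_lt_sum (g := fun _ => (0 : R))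
    (fun j _ => mul_nonpos_of_nonneg_of_nonpos (hw j) (hv j).le)
    ⟨j₀, Finset.mem_univ _, mul_neg_of_pos_of_neg hw₀ (hv j₀)⟩

section Derivatives

variable {𝕜 : Type*} [NontriviallyNormedField 𝕜] {f g : 𝕜 → 𝕜} {f' g' t : 𝕜}

theorem HasDerivAt.div_one_sub (hf : HasDerivAt f f' t) (hg : HasDerivAt g g' t)
    (h : 1 - g t ≠ 0) :
    HasDerivAt (fun τ => f τ / (1 - g τ))
      (((1 - g t) * f' + f t * g') / (1 - g t) ^ 2) t := by
  refine (hf.fun_div (hg.const_sub 1) h).congr_deriv ?_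
  ring

theorem HasDerivAt.div_const_mul_one_sub_sub (hf : HasDerivAt f f' t) (hg : HasDerivAt g g' t)
    (c : 𝕜) (h : c * (1 - g t - f t) ≠ 0) :
    HasDerivAt (fun τ => f τ / (c * (1 - g τ - f τ)))
      (((1 - g t) * f' + f t * g') / (c * (1 - g t - f t) ^ 2)) t := by
  have hc : c ≠ 0 := left_ne_zero_of_mul h
  have hd : 1 - g t - f t ≠ 0 := right_ne_zero_of_mul h
  refine (hf.fun_div (((hg.const_sub 1).fun_sub hf).const_mul c) h).congr_deriv ?_
  field_simp
  ring

end Derivatives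

theorem fi_decreasing_in_tau1_general {N : ℕ}
    (B : Matrix (Fin N) (Fin N) ℝ) (hB : IsConnectedAdjMatrix B)
    (τ₁ τ₂ : ℝ) (hτ₂ : 0 < τ₂)
    (x y : ℝ → Fin N → ℝ)
    (hdx : ∀ i, DifferentiableAt ℝ (fun τ => x τ i) τ₁)
    (hdy : ∀ i, DifferentiableAt ℝ (fun τ => y τ i) τ₁)
    (hnbhd : ∀ᶠ τ in nhds τ₁,
      (∀ i, 0 < x τ i ∧ 0 < y τ i ∧ x τ i + y τ i < 1) ∧
      (∀ i, ∑ j, B i j * y τ j = y τ i / (τ₂ * (1 - x τ i - y τ i))))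
    (hy' : ∀ j, deriv (fun τ => y τ j) τ₁ < 0) :
    ∀ i, (1 - x τ₁ i) * deriv (fun τ => y τ i) τ₁ +
        y τ₁ i * deriv (fun τ => x τ i) τ₁ < 0 ∧
      deriv (fun τ => y τ i / (1 - x τ i)) τ₁ < 0 := by
  intro i
  obtain ⟨hbounds, hfix⟩ := hnbhd.self_of_nhds
  obtain ⟨-, hy, hxy⟩ := hbounds i
  have hgap : 0 < 1 - x τ₁ i - y τ₁ i := by linarith
  have hx1 : 0 < 1 - x τ₁ i := by linarith
  have hlhs : HasDerivAt (fun τ => ∑ j, B i j * y τ j)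
      (∑ j, B i j * deriv (fun τ => y τ j) τ₁) τ₁ :=
    HasDerivAt.fun_sum fun j _ => (hdy j).hasDerivAt.const_mul (B i j)
  have hrhs := ((hdy i).hasDerivAt.div_const_mul_one_sub_sub (hdx i).hasDerivAt τ₂
    (by positivity)).congr_of_eventuallyEq (hnbhd.mono fun τ h => h.2 i)
  have hsum_neg : ∑ j, B i j * deriv (fun τ => y τ j) τ₁ < 0 :=
    sum_mul_neg_of_sum_mul_pos (hB.nonneg i) (by rw [hfix i]; positivity) hy'
  have hnum : (1 - x τ₁ i) * deriv (fun τ => y τ i) τ₁ +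
      y τ₁ i * deriv (fun τ => x τ i) τ₁ < 0 := by
    rwa [hlhs.unique hrhs, div_lt_iff₀ (by positivity), zero_mul] at hsum_neg
  refine ⟨hnum, ?_⟩
  rw [((hdy i).hasDerivAt.div_one_sub (hdx i).hasDerivAt hx1.ne').deriv]
  exact div_neg_of_neg_of_pos hnum (pow_pos hx1 2)

/-- Let `B` be the adjacency matrix of a connected undirected graph on `N`
vertices, fix `τ₂ > 0`, and let `x, y : ℝ → ℝ^N` be differentiable at a point `τ₁ > 0`, with
`0 < x_i(τ)`, `0 < y_i(τ)` and `x_i(τ) + y_i(τ) < 1` for all `i`, for `τ` in a neighborhood of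
`τ₁`, and suppose that for every such `τ` the second coexistence fixed point equation
`Σ_j B_{ij} y_j(τ) = y_i(τ)/(τ₂(1 − x_i(τ) − y_i(τ)))` holds for all `i`. If `y_j'(τ₁) < 0`
for all `j`, then for every `i` one has
`(1 − x_i(τ₁))·y_i'(τ₁) + y_i(τ₁)·x_i'(τ₁) < 0`; in particular the derivative of
`τ ↦ y_i(τ)/(1 − x_i(τ))` at `τ₁` is strictly negative for every `i`. -/
theorem fi_decreasing_in_tau1 {N : ℕ}
    (B : Matrix (Fin N) (Fin N) ℝ) (hB : IsConnectedAdjMatrix B)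
    (τ₁ τ₂ : ℝ) (hτ₁ : 0 < τ₁) (hτ₂ : 0 < τ₂)
    (x y : ℝ → Fin N → ℝ)
    (hdx : ∀ i, DifferentiableAt ℝ (fun τ => x τ i) τ₁)
    (hdy : ∀ i, DifferentiableAt ℝ (fun τ => y τ i) τ₁)
    (hnbhd : ∀ᶠ τ in nhds τ₁,
      (∀ i, 0 < x τ i ∧ 0 < y τ i ∧ x τ i + y τ i < 1) ∧
      (∀ i, ∑ j, B i j * y τ j = y τ i / (τ₂ * (1 - x τ i - y τ i))))
    (hy' : ∀ j, deriv (fun τ => y τ j) τ₁ < 0) :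
    ∀ i, (1 - x τ₁ i) * deriv (fun τ => y τ i) τ₁ +
        y τ₁ i * deriv (fun τ => x τ i) τ₁ < 0 ∧
      deriv (fun τ => y τ i / (1 - x τ i)) τ₁ < 0 :=
  fi_decreasing_in_tau1_general B hB τ₁ τ₂ hτ₂ x y hdx hdy hnbhd hy'
end

section
/- Let a, b, u, v be real numbers with 0 < a < 1, 0 < b < 1, 0 ≤ u ≤ a, 0 ≤ v ≤ b. If u < a·(1 − v) and v < b·(1 − u), then u + v < (a + b − 2ab)/(1 − ab); equivalently, 1 − u − v > (1 − a)(1 − b)/(1 − ab) = 1/(1/(1 − a) + 1/(1 − b) − 1). -/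
/-- Let `a, b, u, v` be real numbers with `0 < a < 1`, `0 < b < 1`,
`0 ≤ u ≤ a`, `0 ≤ v ≤ b`. If `u < a·(1 − v)` and `v < b·(1 − u)`, then
`u + v < (a + b − 2ab)/(1 − ab)`; equivalently,
`1 − u − v > (1 − a)(1 − b)/(1 − ab) = 1/(1/(1 − a) + 1/(1 − b) − 1)`. -/
theorem pointwise_algebraic_bound (a b u v : ℝ)
    (ha : 0 < a) (ha1 : a < 1) (hb : 0 < b) (hb1 : b < 1)
    (hu0 : 0 ≤ u) (hua : u ≤ a) (hv0 : 0 ≤ v) (hvb : v ≤ b)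
    (h1 : u < a * (1 - v)) (h2 : v < b * (1 - u)) :
    u + v < (a + b - 2 * a * b) / (1 - a * b) ∧
    (1 - a) * (1 - b) / (1 - a * b) < 1 - u - v ∧
    (1 - a) * (1 - b) / (1 - a * b) = 1 / (1 / (1 - a) + 1 / (1 - b) - 1) := by
  have hab : 0 < 1 - a * b := by nlinarith
  have key : (u + v) * (1 - a * b) < a + b - 2 * a * b := by nlinarith [mul_pos (sub_pos.mpr hb1) (sub_pos.mpr ha1)]
  have h3 : u + v < (a + b - 2 * a * b) / (1 - a * b) := (lt_div_iff₀ hab).mpr key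
  refine ⟨h3, ?_, ?_⟩
  · rw [div_lt_iff₀ hab] at *
    nlinarith
  · have h1a : (1 : ℝ) - a ≠ 0 := by linarith
    have h1b : (1 : ℝ) - b ≠ 0 := by linarith
    have hd : 1 / (1 - a) + 1 / (1 - b) - 1 = (1 - a * b) / ((1 - a) * (1 - b)) := by
      field_simp
      ring
    rw [hd, one_div_div]
end

section
/- Let x*, y* ∈ ℝ^N have all entries strictly between 0 and 1, let c₁, c₂ > 0 satisfy c₁ ≥ (1/N)·Σ_i 1/(1 − x*_i) and c₂ ≥ (1/N)·Σ_i 1/(1 − y*_i) (so that c₁, c₂ > 1), and let x̂, ŷ ∈ ℝ^N satisfy, for every i, 0 ≤ x̂_i, 0 ≤ ŷ_i, x̂_i + ŷ_i < 1 and 1 − x̂_i − ŷ_i > 1/(1/(1 − x*_i) + 1/(1 − y*_i) − 1). Then (1/N)·(Σ_i x̂_i + Σ_i ŷ_i) < 1 − 1/(c₁ + c₂ − 1). -/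
open Finset

/-- Let `x*, y* ∈ ℝ^N` have all entries strictly between 0 and 1, let
`c₁, c₂ > 0` satisfy `c₁ ≥ (1/N)·Σ_i 1/(1 − x*_i)` and `c₂ ≥ (1/N)·Σ_i 1/(1 − y*_i)`, and
let `x̂, ŷ ∈ ℝ^N` satisfy, for every `i`, `0 ≤ x̂_i`, `0 ≤ ŷ_i`, `x̂_i + ŷ_i < 1` and
`1 − x̂_i − ŷ_i > 1/(1/(1 − x*_i) + 1/(1 − y*_i) − 1)`. Then
`(1/N)·(Σ_i x̂_i + Σ_i ŷ_i) < 1 − 1/(c₁ + c₂ − 1)`. -/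
theorem jensen_average_bound {N : ℕ} (hN : 1 ≤ N)
    (xstar ystar : Fin N → ℝ)
    (hxs : ∀ i, 0 < xstar i ∧ xstar i < 1)
    (hys : ∀ i, 0 < ystar i ∧ ystar i < 1)
    (c₁ c₂ : ℝ) (hc₁0 : 0 < c₁) (hc₂0 : 0 < c₂)
    (hc₁ : (1 / (N : ℝ)) * ∑ i, 1 / (1 - xstar i) ≤ c₁)
    (hc₂ : (1 / (N : ℝ)) * ∑ i, 1 / (1 - ystar i) ≤ c₂)
    (xhat yhat : Fin N → ℝ)
    (hhat : ∀ i, 0 ≤ xhat i ∧ 0 ≤ yhat i ∧ xhat i + yhat i < 1 ∧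
      1 / (1 / (1 - xstar i) + 1 / (1 - ystar i) - 1) < 1 - xhat i - yhat i) :
    (1 / (N : ℝ)) * ((∑ i, xhat i) + ∑ i, yhat i) < 1 - 1 / (c₁ + c₂ - 1) := by
  have hNpos : (0 : ℝ) < N := by exact_mod_cast Nat.lt_of_lt_of_le Nat.zero_lt_one hN
  set w : Fin N → ℝ := fun i => 1 / (1 - xstar i) + 1 / (1 - ystar i) - 1 with hwdef
  have hx1 : ∀ i, (1:ℝ) < 1 / (1 - xstar i) := fun i => by
    have h1 := (hxs i).1; have h2 := (hxs i).2
    rw [lt_div_iff₀ (by linarith)]; linarith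
  have hy1 : ∀ i, (1:ℝ) < 1 / (1 - ystar i) := fun i => by
    have h1 := (hys i).1; have h2 := (hys i).2
    rw [lt_div_iff₀ (by linarith)]; linarith
  have hw1 : ∀ i, (1:ℝ) < w i := fun i => by
    have := hx1 i; have := hy1 i; simp only [hwdef]; linarith
  have hwpos : ∀ i, (0:ℝ) < w i := fun i => lt_trans one_pos (hw1 i)
  -- sum of w bounded
  have hWsum : ∑ i, w i ≤ (N : ℝ) * (c₁ + c₂ - 1) := by
    have h1 : ∑ i, 1 / (1 - xstar i) ≤ (N:ℝ) * c₁ := by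
      rw [div_mul_eq_mul_div, div_le_iff₀ hNpos] at hc₁; linarith [hc₁]
    have h2 : ∑ i, 1 / (1 - ystar i) ≤ (N:ℝ) * c₂ := by
      rw [div_mul_eq_mul_div, div_le_iff₀ hNpos] at hc₂; linarith [hc₂]
    simp only [hwdef, Finset.sum_sub_distrib, Finset.sum_add_distrib, Finset.sum_const,
      Finset.card_univ, Fintype.card_fin, nsmul_eq_mul, mul_one]
    simp only [one_div] at h1 h2 ⊢
    linarith
  have hWpos : (0:ℝ) < ∑ i, w i :=
    Finset.sum_pos (fun i _ => hwpos i) (by simp [Finset.univ_nonempty_iff]; exact Fin.pos_iff_nonempty.mp hN)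
  -- Cauchy-Schwarz: N^2 ≤ (∑ 1/w) * (∑ w)
  have hCS : ((N:ℝ))^2 ≤ (∑ i, 1 / w i) * ∑ i, w i := by
    have := Finset.sum_sq_le_sum_mul_sum_of_sq_eq_mul (Finset.univ : Finset (Fin N))
      (r := fun _ => (1:ℝ)) (f := fun i => 1 / w i) (g := w)
      (fun i _ => (one_div_pos.mpr (hwpos i)).le) (fun i _ => (hwpos i).le)
      (fun i _ => by simp only [one_pow]; exact (one_div_mul_cancel (hwpos i).ne').symm)
    simpa using this
  have hcc : (1:ℝ) < c₁ + c₂ - 1 := by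
    have h1 : (1:ℝ) < c₁ := by
      have : (N:ℝ) * 1 < ∑ i, 1 / (1 - xstar i) := by
        calc (N:ℝ) * 1 = ∑ _i : Fin N, (1:ℝ) := by simp [mul_comm]
        _ < _ := Finset.sum_lt_sum_of_nonempty (by simp [Finset.univ_nonempty_iff]; exact Fin.pos_iff_nonempty.mp hN) (fun i _ => hx1 i)
      rw [div_mul_eq_mul_div, div_le_iff₀ hNpos] at hc₁; nlinarith
    have h2 : (1:ℝ) < c₂ := by
      have : (N:ℝ) * 1 < ∑ i, 1 / (1 - ystar i) := by
        calc (N:ℝ) * 1 = ∑ _i : Fin N, (1:ℝ) := by simp [mul_comm]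
        _ < _ := Finset.sum_lt_sum_of_nonempty (by simp [Finset.univ_nonempty_iff]; exact Fin.pos_iff_nonempty.mp hN) (fun i _ => hy1 i)
      rw [div_mul_eq_mul_div, div_le_iff₀ hNpos] at hc₂; nlinarith
    linarith
  have hccpos : (0:ℝ) < c₁ + c₂ - 1 := lt_trans one_pos hcc
  -- T ≥ N / (c₁+c₂-1)
  have hT : (N:ℝ) / (c₁ + c₂ - 1) ≤ ∑ i, 1 / w i := by
    rw [div_le_iff₀ hccpos] at *
    nlinarith [hCS, hWsum, Finset.sum_pos (fun (i : Fin N) (_ : i ∈ Finset.univ) => (one_div_pos.mpr (hwpos i))) (by simp [Finset.univ_nonempty_iff]; exact Fin.pos_iff_nonempty.mp hN)]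
  -- strict sum bound
  have hsum : (∑ i, xhat i) + ∑ i, yhat i < (N:ℝ) - ∑ i, 1 / w i := by
    have : ∑ i, (xhat i + yhat i) < ∑ i, (1 - 1 / w i) := by
      apply Finset.sum_lt_sum_of_nonempty (by simp [Finset.univ_nonempty_iff]; exact Fin.pos_iff_nonempty.mp hN)
      intro i _
      have := (hhat i).2.2.2
      simp only [hwdef] at this ⊢
      linarith
    simpa [Finset.sum_add_distrib, Finset.sum_sub_distrib, Finset.card_univ] using this
  rw [div_mul_eq_mul_div, div_lt_iff₀ hNpos, one_mul]
  have : (1 - 1 / (c₁ + c₂ - 1)) * (N:ℝ) = (N:ℝ) - (N:ℝ)/(c₁ + c₂ - 1) := by ring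
  rw [this]
  linarith
end
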